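/- Let F be a Randers metric with parameters (M, ω), ‖ω‖_{M⁻¹} < 1, and set α = 1 − ωᵀ M⁻¹ ω > 0. Then the dual metric F*(u) = max{uᵀv : F(v) ≤ 1} is again a Randers metric with parameters M* = (1/α²)(α M⁻¹ + (M⁻¹ω)(M⁻¹ω)ᵀ) and ω* = −(1/α) M⁻¹ ω, i.e., F*(u) = √(uᵀ M* u) + (ω*)ᵀ u for all u. -/

import Mathlib

/-!
Squaring `√(vᵀMv) ≤ 1 - ωᵀv` is reversible, because Cauchy–Schwarz `(ωᵀv)² ≤ (ωᵀM⁻¹ω)(vᵀMv)`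
already forces `1 - ωᵀv ≥ 0`; hence the Randers unit ball is the ellipsoid
`(v - c)ᵀ A (v - c) ≤ 1/α` with `A = M - ωωᵀ` and `c = -(1/α) M⁻¹ω`.
By Cauchy–Schwarz for the inner product defined by `A`, the support function of the ellipsoid
`(v - c)ᵀ A (v - c) ≤ r` is `uᵀc + √(r · uᵀA⁻¹u)`, attained at `c + √(r / uᵀA⁻¹u) · A⁻¹u`.
Finally Sherman–Morrison gives `A⁻¹ = M⁻¹ + (1/α) (M⁻¹ω)(M⁻¹ω)ᵀ`, so `(1/α) A⁻¹ = M*`.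
-/

open Matrix

lemma Real.sqrt_add_le_one_iff {a b : ℝ} (hb : b ^ 2 ≤ a) : √a + b ≤ 1 ↔ a ≤ (1 - b) ^ 2 := by
  rw [← le_sub_iff_add_le, Real.sqrt_le_iff]
  exact ⟨And.right, fun h => ⟨by nlinarith, h⟩⟩

namespace Matrix

variable {ι : Type*}

lemma PosDef.isSymm {A : Matrix ι ι ℝ} (hA : A.PosDef) : A.IsSymm :=
  isHermitian_iff_isSymm.mp hA.isHermitian

variable [Fintype ι]

lemma IsSymm.dotProduct_mulVec_comm {R : Type*} [CommSemiring R] {A : Matrix ι ι R}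
    (hA : A.IsSymm) (x y : ι → R) : x ⬝ᵥ A *ᵥ y = y ⬝ᵥ A *ᵥ x := by
  rw [← dotProduct_transpose_mulVec, hA.eq]

lemma dotProduct_vecMulVec_mulVec {R : Type*} [CommSemiring R] (a b x y : ι → R) :
    x ⬝ᵥ vecMulVec a b *ᵥ y = (x ⬝ᵥ a) * (b ⬝ᵥ y) := by
  rw [dotProduct_mulVec, vecMul_vecMulVec, smul_dotProduct, smul_eq_mul]

lemma PosSemidef.dotProduct_mulVec_sq_le {A : Matrix ι ι ℝ} (hA : A.PosSemidef) (x y : ι → ℝ) :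
    (x ⬝ᵥ A *ᵥ y) ^ 2 ≤ (x ⬝ᵥ A *ᵥ x) * (y ⬝ᵥ A *ᵥ y) := by
  let _ := A.toSeminormedAddCommGroup hA
  let _ := A.toInnerProductSpace hA
  have hinner (x y : ι → ℝ) : inner ℝ x y = x ⬝ᵥ A *ᵥ y := by
    change (A *ᵥ y) ⬝ᵥ star x = _
    rw [star_trivial, dotProduct_comm]
  simpa only [hinner, sq] using real_inner_mul_inner_self_le x y

lemma PosSemidef.dotProduct_mulVec_self_nonneg {A : Matrix ι ι ℝ} (hA : A.PosSemidef)
    (x : ι → ℝ) : 0 ≤ x ⬝ᵥ A *ᵥ x := by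
  simpa only [star_trivial] using hA.dotProduct_mulVec_nonneg x

variable [DecidableEq ι]

/-- The Sherman–Morrison formula. -/
theorem inv_sub_vecMulVec {K : Type*} [Field K] {M : Matrix ι ι K} (hM : IsUnit M)
    (a b : ι → K) (h : b ⬝ᵥ M⁻¹ *ᵥ a ≠ 1) :
    (M - vecMulVec a b)⁻¹ =
      M⁻¹ + (1 - b ⬝ᵥ M⁻¹ *ᵥ a)⁻¹ • vecMulVec (M⁻¹ *ᵥ a) (b ᵥ* M⁻¹) := by
  have hdet := (isUnit_iff_isUnit_det M).mp hM
  set c := (1 - b ⬝ᵥ M⁻¹ *ᵥ a)⁻¹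
  have hc : c * (1 - b ⬝ᵥ M⁻¹ *ᵥ a) = 1 := inv_mul_cancel₀ (sub_ne_zero.mpr h.symm)
  apply inv_eq_right_inv
  rw [sub_mul, mul_add, mul_add, mul_nonsing_inv _ hdet, mul_smul_comm, mul_vecMulVec,
    mulVec_mulVec, mul_nonsing_inv _ hdet, one_mulVec, vecMulVec_mul, mul_smul_comm,
    vecMulVec_mul_vecMulVec, vecMulVec_smul]
  have hV (V : Matrix ι ι K) : c • V - (V + c • (b ⬝ᵥ M⁻¹ *ᵥ a) • V) =
      (c * (1 - b ⬝ᵥ M⁻¹ *ᵥ a) - 1) • V := by module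
  rw [add_sub_assoc, hV, hc, sub_self, zero_smul, add_zero]

theorem IsSymm.inv_sub_vecMulVec_self {K : Type*} [Field K] {M : Matrix ι ι K} (hS : M.IsSymm)
    (hM : IsUnit M) (ω : ι → K) (h : ω ⬝ᵥ M⁻¹ *ᵥ ω ≠ 1) :
    (M - vecMulVec ω ω)⁻¹ =
      M⁻¹ + (1 - ω ⬝ᵥ M⁻¹ *ᵥ ω)⁻¹ • vecMulVec (M⁻¹ *ᵥ ω) (M⁻¹ *ᵥ ω) := by
  rw [inv_sub_vecMulVec hM ω ω h, ← hS.inv.eq, vecMul_transpose, hS.inv.eq]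

lemma PosDef.mulVec_inv_mulVec {A : Matrix ι ι ℝ} (hA : A.PosDef) (x : ι → ℝ) :
    A *ᵥ (A⁻¹ *ᵥ x) = x := by
  rw [mulVec_mulVec, mul_nonsing_inv _ ((isUnit_iff_isUnit_det A).mp hA.isUnit), one_mulVec]

lemma PosDef.sq_dotProduct_le {M : Matrix ι ι ℝ} (hM : M.PosDef) (ω v : ι → ℝ) :
    (ω ⬝ᵥ v) ^ 2 ≤ (ω ⬝ᵥ M⁻¹ *ᵥ ω) * (v ⬝ᵥ M *ᵥ v) := by
  have h := hM.posSemidef.dotProduct_mulVec_sq_le (M⁻¹ *ᵥ ω) v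
  rwa [hM.isSymm.dotProduct_mulVec_comm, hM.mulVec_inv_mulVec, dotProduct_comm v,
    dotProduct_comm _ ω] at h

lemma PosDef.sub_vecMulVec_self {M : Matrix ι ι ℝ} (hM : M.PosDef) {ω : ι → ℝ}
    (hω : ω ⬝ᵥ M⁻¹ *ᵥ ω < 1) : (M - vecMulVec ω ω).PosDef := by
  refine .of_dotProduct_mulVec_pos ?_ fun x hx => ?_
  · simpa only [star_trivial] using
      hM.isHermitian.sub (posSemidef_vecMulVec_self_star ω).isHermitian
  · have hMx : 0 < x ⬝ᵥ M *ᵥ x := by simpa only [star_trivial] using hM.dotProduct_mulVec_pos hx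
    have hCS := hM.sq_dotProduct_le ω x
    rw [star_trivial, sub_mulVec, dotProduct_sub, dotProduct_vecMulVec_mulVec, dotProduct_comm x ω]
    nlinarith

lemma PosDef.dotProduct_le_sqrt {A : Matrix ι ι ℝ} (hA : A.PosDef) (u : ι → ℝ) {w : ι → ℝ}
    {r : ℝ} (hw : w ⬝ᵥ A *ᵥ w ≤ r) : u ⬝ᵥ w ≤ √(r * (u ⬝ᵥ A⁻¹ *ᵥ u)) := by
  apply Real.le_sqrt_of_sq_le
  have hCS := hA.posSemidef.dotProduct_mulVec_sq_le (A⁻¹ *ᵥ u) w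
  rw [hA.isSymm.dotProduct_mulVec_comm _ w, hA.mulVec_inv_mulVec, dotProduct_comm w,
    dotProduct_comm (A⁻¹ *ᵥ u)] at hCS
  have ht := hA.inv.posSemidef.dotProduct_mulVec_self_nonneg u
  nlinarith

theorem PosDef.isGreatest_dotProduct_ellipsoid {A : Matrix ι ι ℝ} (hA : A.PosDef)
    (c u : ι → ℝ) {r : ℝ} (hr : 0 ≤ r) :
    IsGreatest ((u ⬝ᵥ ·) '' {v | (v - c) ⬝ᵥ A *ᵥ (v - c) ≤ r})
      (u ⬝ᵥ c + √(r * (u ⬝ᵥ A⁻¹ *ᵥ u))) := by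
  set t := u ⬝ᵥ A⁻¹ *ᵥ u
  have ht : 0 ≤ t := hA.inv.posSemidef.dotProduct_mulVec_self_nonneg u
  refine ⟨⟨c + (√r / √t) • A⁻¹ *ᵥ u, ?_, ?_⟩, ?_⟩
  · simp only [Set.mem_ofPred_eq, add_sub_cancel_left, mulVec_smul, dotProduct_smul,
      hA.mulVec_inv_mulVec, smul_eq_mul, dotProduct_comm _ u]
    rcases ht.eq_or_lt with h0 | hpos
    · simp [← h0, hr]
    · rw [← mul_assoc, ← sq, div_pow, Real.sq_sqrt hr, Real.sq_sqrt ht,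
        div_mul_cancel₀ _ hpos.ne']
  · simp only [dotProduct_add, dotProduct_smul, smul_eq_mul]
    rw [div_mul_eq_mul_div, mul_div_assoc, Real.div_sqrt, ← Real.sqrt_mul hr]
  · rintro _ ⟨v, hv, rfl⟩
    have h := hA.dotProduct_le_sqrt u hv
    rw [dotProduct_sub] at h
    linarith

/-- The centre of the Randers unit ball, seen as an ellipsoid; it is also the drift `ω*` of the
dual metric. -/
noncomputable def randersCenter (M : Matrix ι ι ℝ) (ω : ι → ℝ) : ι → ℝ :=
  -(1 - ω ⬝ᵥ M⁻¹ *ᵥ ω)⁻¹ • M⁻¹ *ᵥ ω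

lemma PosDef.quadForm_sub_randersCenter {M : Matrix ι ι ℝ} (hM : M.PosDef) {ω : ι → ℝ}
    (hω : ω ⬝ᵥ M⁻¹ *ᵥ ω ≠ 1) (v : ι → ℝ) :
    (v - randersCenter M ω) ⬝ᵥ (M - vecMulVec ω ω) *ᵥ (v - randersCenter M ω) =
      v ⬝ᵥ M *ᵥ v - (1 - ω ⬝ᵥ v) ^ 2 + (1 - ω ⬝ᵥ M⁻¹ *ᵥ ω)⁻¹ := by
  unfold randersCenter
  set s := ω ⬝ᵥ M⁻¹ *ᵥ ω
  have hs : 1 - s ≠ 0 := sub_ne_zero.mpr hω.symm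
  have hqv : (M⁻¹ *ᵥ ω) ⬝ᵥ M *ᵥ v = ω ⬝ᵥ v := by
    rw [hM.isSymm.dotProduct_mulVec_comm, hM.mulVec_inv_mulVec, dotProduct_comm]
  have hqω : (M⁻¹ *ᵥ ω) ⬝ᵥ ω = s := dotProduct_comm _ _
  simp only [sub_mulVec, mulVec_sub, mulVec_smul, hM.mulVec_inv_mulVec, dotProduct_sub,
    sub_dotProduct, dotProduct_smul, smul_dotProduct, dotProduct_vecMulVec_mulVec, hqv, hqω,
    smul_eq_mul]
  rw [dotProduct_comm v ω]
  field_simp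
  ring

lemma PosDef.randers_le_one_iff {M : Matrix ι ι ℝ} (hM : M.PosDef) {ω : ι → ℝ}
    (hω : ω ⬝ᵥ M⁻¹ *ᵥ ω < 1) (v : ι → ℝ) :
    √(v ⬝ᵥ M *ᵥ v) + ω ⬝ᵥ v ≤ 1 ↔
      (v - randersCenter M ω) ⬝ᵥ (M - vecMulVec ω ω) *ᵥ (v - randersCenter M ω) ≤
        (1 - ω ⬝ᵥ M⁻¹ *ᵥ ω)⁻¹ := by
  have hωv : (ω ⬝ᵥ v) ^ 2 ≤ v ⬝ᵥ M *ᵥ v := by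
    have := hM.sq_dotProduct_le ω v
    have := hM.posSemidef.dotProduct_mulVec_self_nonneg v
    nlinarith
  rw [hM.quadForm_sub_randersCenter hω.ne, add_le_iff_nonpos_left, sub_nonpos]
  exact Real.sqrt_add_le_one_iff hωv

end Matrix

theorem dual_randers (n : ℕ) (M : Matrix (Fin n) (Fin n) ℝ) (ω : Fin n → ℝ)
    (hM : M.PosDef) (hω : ω ⬝ᵥ M⁻¹.mulVec ω < 1) :
    ∀ u : Fin n → ℝ,
      sSup ((fun v => u ⬝ᵥ v) ''
          {v : Fin n → ℝ | Real.sqrt (v ⬝ᵥ M.mulVec v) + ω ⬝ᵥ v ≤ 1}) =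
        Real.sqrt (u ⬝ᵥ
            (((1 - ω ⬝ᵥ M⁻¹.mulVec ω) ^ 2)⁻¹ •
              ((1 - ω ⬝ᵥ M⁻¹.mulVec ω) • M⁻¹ +
                vecMulVec (M⁻¹.mulVec ω) (M⁻¹.mulVec ω))).mulVec u) +
          (-(1 - ω ⬝ᵥ M⁻¹.mulVec ω)⁻¹ • M⁻¹.mulVec ω) ⬝ᵥ u := by
  intro u
  have hα : 0 < 1 - ω ⬝ᵥ M⁻¹ *ᵥ ω := sub_pos.mpr hω
  simp_rw [hM.randers_le_one_iff hω]
  rw [((hM.sub_vecMulVec_self hω).isGreatest_dotProduct_ellipsoid _ u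
      (inv_nonneg.mpr hα.le)).csSup_eq,
    hM.isSymm.inv_sub_vecMulVec_self hM.isUnit ω hω.ne, dotProduct_comm u, add_comm]
  congr 2
  rw [← smul_eq_mul, ← dotProduct_smul, ← smul_mulVec]
  congr 2
  match_scalars <;> field_simp
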